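/- Every 2×2 real matrix both of whose eigenvalues (complex roots of the characteristic polynomial) have positive real part can be written as λ · g⁻¹ N g for some g ∈ GL(2,ℝ), some real λ > 0, and some matrix N from the following list: (1) diag(1−x, x) with 0 < x ≤ 1/2; (2) the matrix with rows (1/2, 1),(0, 1/2); (3) the matrix with rows (1/2, −α),(α, 1/2) with α > 0. -/
import Mathlib

open Module Polynomial

lemma mem_roots_quad (t D : ℝ) (z : ℂ) (hz : z^2 - t*z + D = 0) :
    z ∈ ((X^2 - C t * X + C D : ℝ[X]).map (algebraMap ℝ ℂ)).roots := by
  have hmap : (X^2 - C t * X + C D : ℝ[X]).map (algebraMap ℝ ℂ)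
      = X^2 - C (t:ℂ) * X + C (D:ℂ) := by
    simp [Polynomial.map_add, Polynomial.map_sub, Polynomial.map_mul, Polynomial.map_pow]
  have hne : (X^2 - C (t:ℂ) * X + C (D:ℂ) : ℂ[X]) ≠ 0 := by
    intro h
    have := congrArg (fun p => Polynomial.coeff p 2) h
    simp [coeff_X, coeff_C] at this
  rw [hmap, Polynomial.mem_roots hne]
  simp [IsRoot, eval_add, eval_sub, eval_mul, eval_pow]
  linear_combination hz

lemma charpoly_two (M : Matrix (Fin 2) (Fin 2) ℝ) :
    M.charpoly = X^2 - C (M 0 0 + M 1 1) * X + C (M 0 0 * M 1 1 - M 0 1 * M 1 0) := by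
  rw [Matrix.charpoly, Matrix.det_fin_two]
  simp [Matrix.charmatrix_apply_eq, Matrix.charmatrix_apply_ne]
  ring

lemma master (M A N : Matrix (Fin 2) (Fin 2) ℝ) (lam : ℝ) (hA : A.det ≠ 0)
    (h : M * A = A * (lam • N)) :
    ∃ g : (Matrix (Fin 2) (Fin 2) ℝ)ˣ,
      M = lam • ((↑g⁻¹ : Matrix (Fin 2) (Fin 2) ℝ) * N * (↑g : Matrix (Fin 2) (Fin 2) ℝ)) := by
  have hu : IsUnit A := (Matrix.isUnit_iff_isUnit_det A).2 (isUnit_iff_ne_zero.2 hA)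
  obtain ⟨u, rfl⟩ := hu
  refine ⟨u⁻¹, ?_⟩
  have h1 : (↑(u⁻¹⁻¹) : Matrix (Fin 2) (Fin 2) ℝ) = ↑u := by simp
  rw [h1]
  have h2 : (u : Matrix (Fin 2) (Fin 2) ℝ) *
      ((u⁻¹ : (Matrix (Fin 2) (Fin 2) ℝ)ˣ) : Matrix (Fin 2) (Fin 2) ℝ) = 1 := u.mul_inv
  calc M = M * ((u : Matrix (Fin 2) (Fin 2) ℝ) *
        ((u⁻¹ : (Matrix (Fin 2) (Fin 2) ℝ)ˣ) : Matrix (Fin 2) (Fin 2) ℝ)) := by rw [h2, mul_one]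
    _ = (M * ↑u) * ↑(u⁻¹) := by rw [mul_assoc]
    _ = (↑u * (lam • N)) * ↑(u⁻¹) := by rw [h]
    _ = lam • ((↑u : Matrix (Fin 2) (Fin 2) ℝ) * N * ↑(u⁻¹)) := by
        rw [mul_smul_comm, smul_mul_assoc]

lemma assemble (M C P0 P N : Matrix (Fin 2) (Fin 2) ℝ) (lam : ℝ)
    (h1 : M * P0 = P0 * C) (h2 : C * P = P * (lam • N))
    (d0 : P0.det ≠ 0) (dP : P.det ≠ 0) :
    ∃ g : (Matrix (Fin 2) (Fin 2) ℝ)ˣ,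
      M = lam • ((↑g⁻¹ : Matrix (Fin 2) (Fin 2) ℝ) * N * (↑g : Matrix (Fin 2) (Fin 2) ℝ)) := by
  apply master M (P0*P) N lam
  · rw [Matrix.det_mul]; exact mul_ne_zero d0 dP
  · calc M*(P0*P) = (M*P0)*P := (mul_assoc _ _ _).symm
      _ = (P0*C)*P := by rw [h1]
      _ = P0*(C*P) := mul_assoc _ _ _
      _ = P0*(P*(lam•N)) := by rw [h2]
      _ = (P0*P)*(lam•N) := (mul_assoc _ _ _).symm

lemma cyc (a b c d : ℝ) (h : ¬(b = 0 ∧ c = 0 ∧ a = d)) :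
    ∃ P0 : Matrix (Fin 2) (Fin 2) ℝ, P0.det ≠ 0 ∧
      !![a,b;c,d] * P0 = P0 * !![0, -(a*d - b*c); 1, a+d] := by
  by_cases hc : c ≠ 0
  · exact ⟨!![1,a;0,c], by simp [Matrix.det_fin_two_of, hc], by
      ext i j; fin_cases i <;> fin_cases j <;>
        simp [Matrix.mul_apply, Fin.sum_univ_two] <;> ring⟩
  push_neg at hc
  by_cases hb : b ≠ 0
  · exact ⟨!![0,b;1,d], by simp [Matrix.det_fin_two_of, hb], by
      ext i j; fin_cases i <;> fin_cases j <;>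
        simp [Matrix.mul_apply, Fin.sum_univ_two, hc] <;> ring⟩
  push_neg at hb
  have had : a ≠ d := fun h' => h ⟨hb, hc, h'⟩
  exact ⟨!![1,a;1,d], by simp [Matrix.det_fin_two_of]; intro h'; exact had (by linarith), by
    ext i j; fin_cases i <;> fin_cases j <;>
      simp [Matrix.mul_apply, Fin.sum_univ_two, hb, hc] <;> ring⟩

lemma case1 (t s D : ℝ) (hs : s^2 = t^2 - 4*D) (ht : t ≠ 0) :
    !![0,-D;1,t] * !![(t+s)/2 - t, (t-s)/2 - t; 1, 1]
    = !![(t+s)/2 - t, (t-s)/2 - t; 1, 1] *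
      (t • !![1 - (t-s)/(2*t), 0; 0, (t-s)/(2*t)]) := by
  have hD : D = (t^2 - s^2)/4 := by linarith
  subst hD
  ext i j
  fin_cases i <;> fin_cases j <;>
    simp [Matrix.mul_apply, Fin.sum_univ_two, Matrix.smul_apply] <;>
    field_simp <;> ring

lemma case2 (t D : ℝ) (hD : t^2 - 4*D = 0) :
    !![0,-D;1,t] * !![-(t/2), t; 1, 0]
    = !![-(t/2), t; 1, 0] * (t • !![1/2, 1; 0, 1/2]) := by
  have hD' : D = t^2/4 := by linarith
  subst hD'
  ext i j
  fin_cases i <;> fin_cases j <;>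
    simp [Matrix.mul_apply, Fin.sum_univ_two, Matrix.smul_apply] <;> ring

lemma case3 (t β D : ℝ) (hβ : β^2 = D - t^2/4) (ht : t ≠ 0) :
    !![0,-D;1,t] * !![-(t/2), -β; 1, 0]
    = !![-(t/2), -β; 1, 0] * (t • !![1/2, -(β/t); β/t, 1/2]) := by
  have hD : D = β^2 + t^2/4 := by linarith
  subst hD
  ext i j
  fin_cases i <;> fin_cases j <;>
    simp [Matrix.mul_apply, Fin.sum_univ_two, Matrix.smul_apply] <;>
    field_simp <;> ring

/-- All eigenvalues (complex roots of the characteristic polynomial) of the real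
matrix `M` have positive real part. -/
def MatPosSpec {k : ℕ} (M : Matrix (Fin k) (Fin k) ℝ) : Prop :=
  ∀ z ∈ ((M.charpoly).map (algebraMap ℝ ℂ)).roots, 0 < z.re

/-- The list of 2×2 normal forms. -/
def InList2B (N : Matrix (Fin 2) (Fin 2) ℝ) : Prop :=
  (∃ x : ℝ, 0 < x ∧ x ≤ 1/2 ∧ N = !![1 - x, 0; 0, x]) ∨
  (N = !![1/2, 1; 0, 1/2]) ∨
  (∃ α : ℝ, 0 < α ∧ N = !![1/2, -α; α, 1/2])

theorem stmt9 (M : Matrix (Fin 2) (Fin 2) ℝ) (hpos : MatPosSpec M) :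
    ∃ (g : (Matrix (Fin 2) (Fin 2) ℝ)ˣ) (lam : ℝ) (N : Matrix (Fin 2) (Fin 2) ℝ),
      0 < lam ∧ InList2B N ∧
      M = lam • ((↑g⁻¹ : Matrix (Fin 2) (Fin 2) ℝ) * N * (↑g : Matrix (Fin 2) (Fin 2) ℝ)) := by
  set a := M 0 0 with ha
  set b := M 0 1 with hb
  set c := M 1 0 with hc
  set d := M 1 1 with hd
  have hM : M = !![a,b;c,d] := by
    ext i j; fin_cases i <;> fin_cases j <;> rfl
  have hroot : ∀ z : ℂ, z^2 - (a+d)*z + (a*d - b*c) = 0 → 0 < z.re := by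
    intro z hz
    apply hpos z
    rw [charpoly_two M]
    apply mem_roots_quad _ _ z
    push_cast
    exact hz
  rcases lt_trichotomy ((a+d)^2 - 4*(a*d - b*c)) 0 with hΔ | hΔ | hΔ
  · -- complex eigenvalues
    set β := Real.sqrt ((a*d - b*c) - (a+d)^2/4) with hβdef
    have hβ : β^2 = (a*d - b*c) - (a+d)^2/4 := Real.sq_sqrt (by linarith)
    have hβ0 : 0 < β := Real.sqrt_pos.2 (by linarith)
    have ht : 0 < a + d := by
      have hβC : (β:ℂ)^2 = (a:ℂ)*(d:ℂ) - (b:ℂ)*(c:ℂ) - ((a:ℂ)+(d:ℂ))^2/4 := by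
        exact_mod_cast hβ
      have hz : (((a+d)/2 : ℝ):ℂ) + (β:ℂ)*Complex.I ≠ 0 ∨ True := Or.inr trivial
      have hr := hroot ((((a+d)/2 : ℝ):ℂ) + (β:ℂ)*Complex.I)
        (by push_cast; linear_combination (β:ℂ)^2 * Complex.I_sq - hβC)
      simp at hr
      linarith
    have htne : (a+d) ≠ 0 := ne_of_gt ht
    have hns : ¬(b = 0 ∧ c = 0 ∧ a = d) := by
      rintro ⟨hb0, hc0, had⟩
      rw [hb0, hc0, had] at hΔ
      nlinarith
    obtain ⟨P0, hP0det, hP0⟩ := cyc a b c d hns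
    have h2 := case3 (a+d) β (a*d - b*c) (by linarith) htne
    obtain ⟨g, hg⟩ := assemble M !![0, -(a*d - b*c); 1, a+d] P0
      !![-((a+d)/2), -β; 1, 0] !![1/2, -(β/(a+d)); β/(a+d), 1/2] (a+d)
      (hM ▸ hP0) h2 hP0det
      (by simp [Matrix.det_fin_two_of]; exact ne_of_gt hβ0)
    exact ⟨g, a+d, _, ht, Or.inr (Or.inr ⟨β/(a+d), div_pos hβ0 ht, rfl⟩), hg⟩
  · -- double real eigenvalue
    have ht : 0 < a + d := by
      have hr := hroot (((a+d)/2 : ℝ) : ℂ)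
        (by
          have hΔC : ((a:ℂ)+(d:ℂ))^2 - 4*((a:ℂ)*(d:ℂ) - (b:ℂ)*(c:ℂ)) = 0 := by
            exact_mod_cast hΔ
          push_cast
          linear_combination (-1/4 : ℂ) * hΔC)
      simp at hr
      linarith
    by_cases hsc : b = 0 ∧ c = 0 ∧ a = d
    · obtain ⟨hb0, hc0, had⟩ := hsc
      refine ⟨1, a+d, !![1 - 1/2, 0; 0, 1/2], ht,
        Or.inl ⟨1/2, by norm_num, le_refl _, rfl⟩, ?_⟩
      rw [hM, hb0, hc0, had]
      ext i j
      fin_cases i <;> fin_cases j <;>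
        simp [Matrix.mul_apply, Fin.sum_univ_two, Matrix.smul_apply] <;> ring
    · obtain ⟨P0, hP0det, hP0⟩ := cyc a b c d hsc
      have h2 := case2 (a+d) (a*d - b*c) hΔ
      obtain ⟨g, hg⟩ := assemble M !![0, -(a*d - b*c); 1, a+d] P0
        !![-((a+d)/2), a+d; 1, 0] !![1/2, 1; 0, 1/2] (a+d)
        (hM ▸ hP0) h2 hP0det
        (by simp [Matrix.det_fin_two_of]; linarith)
      exact ⟨g, a+d, _, ht, Or.inr (Or.inl rfl), hg⟩
  · -- two distinct real eigenvalues
    set s := Real.sqrt ((a+d)^2 - 4*(a*d - b*c)) with hsdef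
    have hs : s^2 = (a+d)^2 - 4*(a*d - b*c) := Real.sq_sqrt hΔ.le
    have hs0 : 0 < s := Real.sqrt_pos.2 hΔ
    have hr2 : 0 < (a+d-s)/2 := by
      have hr := hroot ((((a+d)-s)/2 : ℝ) : ℂ)
        (by
          have hsC : ((s:ℝ):ℂ)^2 = ((a:ℂ)+(d:ℂ))^2 - 4*((a:ℂ)*(d:ℂ) - (b:ℂ)*(c:ℂ)) := by
            exact_mod_cast hs
          push_cast
          linear_combination (1/4 : ℂ) * hsC)
      simp at hr
      linarith
    have hr1 : 0 < (a+d+s)/2 := by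
      have hr := hroot ((((a+d)+s)/2 : ℝ) : ℂ)
        (by
          have hsC : ((s:ℝ):ℂ)^2 = ((a:ℂ)+(d:ℂ))^2 - 4*((a:ℂ)*(d:ℂ) - (b:ℂ)*(c:ℂ)) := by
            exact_mod_cast hs
          push_cast
          linear_combination (1/4 : ℂ) * hsC)
      simp at hr
      linarith
    have ht : 0 < a + d := by linarith
    have htne : (a+d) ≠ 0 := ne_of_gt ht
    have hns : ¬(b = 0 ∧ c = 0 ∧ a = d) := by
      rintro ⟨hb0, hc0, had⟩
      rw [hb0, hc0, had] at hΔ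
      nlinarith
    obtain ⟨P0, hP0det, hP0⟩ := cyc a b c d hns
    have h2 := case1 (a+d) s (a*d - b*c) hs htne
    obtain ⟨g, hg⟩ := assemble M !![0, -(a*d - b*c); 1, a+d] P0
      !![(a+d+s)/2 - (a+d), (a+d-s)/2 - (a+d); 1, 1]
      !![1 - (a+d-s)/(2*(a+d)), 0; 0, (a+d-s)/(2*(a+d))] (a+d)
      (hM ▸ hP0) h2 hP0det
      (by simp [Matrix.det_fin_two_of]; intro h'; nlinarith)
    refine ⟨g, a+d, _, ht, Or.inl ⟨(a+d-s)/(2*(a+d)), ?_, ?_, rfl⟩, hg⟩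
    · exact div_pos (by linarith) (by linarith)
    · rw [div_le_div_iff₀ (by linarith) (by norm_num)]
      linarith
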